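/- Let M be strongly regular, and suppose e : S_δ → ℂ satisfies |e(z)| ≤ |z| h_M(k₃/|z|) on the sector S_δ. Then there exist constants C, K > 0 such that |e(z)| ≤ C h_M(K/|z|) for all z ∈ S_δ. -/

import Mathlib

/-! Moderate growth gives `M_{p+1} s^{p+1} ≤ A M_1 s · M_p (A s)^p`, so taking infima
`h_M(s) ≤ A M_1 s · h_M(A s)`. With `s = k₃/|z|` the factor `s` cancels the `|z|` in the
hypothesis, leaving `|e(z)| ≤ A k₃ M_1 · h_M(A k₃/|z|)`. -/

/-- The paper's `h_M`. -/
noncomputable def assocFun (M : ℕ → ℝ) (t : ℝ) : ℝ := ⨅ p : ℕ, M p * t ^ p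

lemma assocFun_le {M : ℕ → ℝ} (hM : ∀ p, 0 ≤ M p) {t : ℝ} (ht : 0 ≤ t) (p : ℕ) :
    assocFun M t ≤ M p * t ^ p :=
  ciInf_le ⟨0, by rintro _ ⟨q, rfl⟩; exact mul_nonneg (hM q) (pow_nonneg ht q)⟩ p

lemma assocFun_le_mul_assocFun_mul {M : ℕ → ℝ} {A t : ℝ} (hM : ∀ p, 0 ≤ M p) (hA : 0 ≤ A)
    (ht : 0 ≤ t) (hmg : ∀ p ℓ : ℕ, M (p + ℓ) ≤ A ^ (p + ℓ) * M p * M ℓ) (ℓ : ℕ) :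
    assocFun M t ≤ M ℓ * (A * t) ^ ℓ * assocFun M (A * t) := by
  rw [assocFun, assocFun, Real.mul_iInf_of_nonneg (mul_nonneg (hM ℓ) (by positivity))]
  refine le_ciInf fun p => ?_
  calc assocFun M t ≤ M (p + ℓ) * t ^ (p + ℓ) := assocFun_le hM ht (p + ℓ)
    _ ≤ A ^ (p + ℓ) * M p * M ℓ * t ^ (p + ℓ) := by gcongr; exact hmg p ℓ
    _ = M ℓ * (A * t) ^ ℓ * (M p * (A * t) ^ p) := by ring

theorem kernel_hM_bound_general (M : ℕ → ℝ) (A : ℝ)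
    (hpos : ∀ p, 0 < M p)
    (hA : 0 < A) (hmg : ∀ p ℓ : ℕ, M (p + ℓ) ≤ A ^ (p + ℓ) * M p * M ℓ)
    (h : ℝ → ℝ)
    (hdef : ∀ t : ℝ, 0 < t → h t = ⨅ p : ℕ, M p * t ^ p)
    (δ : ℝ) (k₃ : ℝ) (hk₃ : 0 < k₃) (e : ℂ → ℂ)
    (hbound : ∀ z ∈ {z : ℂ | z ≠ 0 ∧ |Complex.arg z| < δ * Real.pi / 2},
      ‖e z‖ ≤ ‖z‖ * h (k₃ / ‖z‖)) :
    ∃ C K : ℝ, 0 < C ∧ 0 < K ∧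
      ∀ z ∈ {z : ℂ | z ≠ 0 ∧ |Complex.arg z| < δ * Real.pi / 2},
        ‖e z‖ ≤ C * h (K / ‖z‖) := by
  have hM1 := hpos 1
  refine ⟨A * k₃ * M 1, A * k₃, by positivity, by positivity, fun z hz => ?_⟩
  have hr : 0 < ‖z‖ := norm_pos_iff.mpr hz.1
  have hh : ∀ t, 0 < t → h t = assocFun M t := hdef
  have hdil := assocFun_le_mul_assocFun_mul (fun p => (hpos p).le) hA.le
    (div_pos hk₃ hr).le hmg 1
  rw [← hh _ (div_pos hk₃ hr), ← mul_div_assoc, ← hh _ (by positivity)] at hdil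
  calc ‖e z‖ ≤ ‖z‖ * h (k₃ / ‖z‖) := hbound z hz
    _ ≤ ‖z‖ * (M 1 * (A * k₃ / ‖z‖) ^ 1 * h (A * k₃ / ‖z‖)) := by gcongr
    _ = A * k₃ * M 1 * h (A * k₃ / ‖z‖) := by field_simp

/-- If `|e(z)| ≤ |z| h_M(k₃/|z|)` on `S_δ`, then `|e(z)| ≤ C h_M(K/|z|)` on `S_δ`. -/
theorem kernel_hM_bound (M : ℕ → ℝ) (A B : ℝ)
    (hpos : ∀ p, 0 < M p) (hM0 : M 0 = 1)
    (hlc : ∀ p : ℕ, (M (p + 1)) ^ 2 ≤ M p * M (p + 2))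
    (hA : 0 < A) (hmg : ∀ p ℓ : ℕ, M (p + ℓ) ≤ A ^ (p + ℓ) * M p * M ℓ)
    (hB : 0 < B)
    (hsnq : ∀ p : ℕ, ∑' ℓ : ℕ, M (p + ℓ) / ((p + ℓ + 1) * M (p + ℓ + 1)) ≤ B * M p / M (p + 1))
    (h : ℝ → ℝ)
    (hdef : ∀ t : ℝ, 0 < t → h t = ⨅ p : ℕ, M p * t ^ p) (h0 : h 0 = 0)
    (δ : ℝ) (hδ : 0 < δ) (k₃ : ℝ) (hk₃ : 0 < k₃) (e : ℂ → ℂ)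
    (hbound : ∀ z ∈ {z : ℂ | z ≠ 0 ∧ |Complex.arg z| < δ * Real.pi / 2},
      ‖e z‖ ≤ ‖z‖ * h (k₃ / ‖z‖)) :
    ∃ C K : ℝ, 0 < C ∧ 0 < K ∧
      ∀ z ∈ {z : ℂ | z ≠ 0 ∧ |Complex.arg z| < δ * Real.pi / 2},
        ‖e z‖ ≤ C * h (K / ‖z‖) :=
  kernel_hM_bound_general M A hpos hA hmg h hdef δ k₃ hk₃ e hbound
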